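/- Let ((A,[·,·]_A),(V,ρ),T) be a relative Rota-Baxter Lie algebra. Define ρ_T: V → gl(A) by ρ_T(u)(x) = [T(u),x]_A + T(ρ(x)u). Then ρ_T is a representation of the Lie algebra (V,[·,·]_T) on A, where [u,v]_T = ρ(T(u))v − ρ(T(v))u. -/
import Mathlib


universe u

section
variable (K : Type u) [Field K]

/-- A relative Rota-Baxter Lie algebra: a Lie algebra `A`, a representation `rep` of `A`
on `V`, and a relative Rota-Baxter operator `T : V → A`. -/
structure RelRB (A V : Type u) [AddCommGroup A] [Module K A]
    [AddCommGroup V] [Module K V] : Type u where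
  br : A →ₗ[K] A →ₗ[K] A
  skew : ∀ x y, br x y + br y x = 0
  jacobi : ∀ x y z, br x (br y z) = br (br x y) z + br y (br x z)
  rep : A →ₗ[K] Module.End K V
  rep_br : ∀ x y, rep (br x y) = rep x * rep y - rep y * rep x
  T : V →ₗ[K] A
  rb : ∀ u v, br (T u) (T v) = T (rep (T u) v - rep (T v) u)

variable {A V B M : Type u}
  [AddCommGroup A] [Module K A] [AddCommGroup V] [Module K V]
  [AddCommGroup B] [Module K B] [AddCommGroup M] [Module K M]

/-- `ρ_T(u)(x) = [T u, x]_A + T(ρ(x)u)` is a representation of the Lie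
algebra `(V, [·,·]_T)` on `A`. -/
theorem rhoT_is_representation (𝒜 : RelRB K A V) :
    let b : V → V → V := fun u v => 𝒜.rep (𝒜.T u) v - 𝒜.rep (𝒜.T v) u
    let ρT : V → A → A := fun u x => 𝒜.br (𝒜.T u) x + 𝒜.T (𝒜.rep x u)
    ∀ u v x, ρT (b u v) x = ρT u (ρT v x) - ρT v (ρT u x) := by
  intro b ρT u v x
  simp only [b, ρT]
  have jac : 𝒜.br (𝒜.br (𝒜.T u) (𝒜.T v)) x
      = 𝒜.br (𝒜.T u) (𝒜.br (𝒜.T v) x) - 𝒜.br (𝒜.T v) (𝒜.br (𝒜.T u) x) := by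
    rw [𝒜.jacobi (𝒜.T u) (𝒜.T v) x]; abel
  have h1 := 𝒜.rb u (𝒜.rep x v)
  have h2 := 𝒜.rb v (𝒜.rep x u)
  rw [← 𝒜.rb, jac]
  simp only [map_sub, map_add, 𝒜.rep_br, h1, h2, LinearMap.sub_apply,
    LinearMap.add_apply, Module.End.mul_apply]
  abel

end
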